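/- In the extended model with transmission success probability p ∈ (0, 1], write p̄ = 1 − p and for each l ≥ 0 let S_l = (1/(aBN))·Σ_{k=1}^{aBN} α^{[l]}_k denote the mean of the l-failure sequence over one period. Then the series E := Σ_{l=0}^{∞} p·p̄^l·S_l converges, and (B' + N' − n)/2 + K + (p̄/p)·N' − a·b/2 ≤ E ≤ (B' + N' − n)/2 + K + (p̄/p)·N' + a·b/2. -/

import Mathlib

/-- The `l`-failure Age-of-Information sequence of the extended model. -/
def aoiExt (A' B' N' ΔB ΔN : ℤ) (l k : ℕ) : ℤ :=
  2 + (l : ℤ) * N' + ((k : ℤ) * A' - ΔN - 1) % N' +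
    (((k : ℤ) * A' - ΔB - 2 - (l : ℤ) * N') % B' -
      ((k : ℤ) * A' - ΔN - 1) % N') % B'

/-- The constant `K = 2 + (Δ_N + 1) %̄ n` where `x %̄ m = ⌈x/m⌉·m − x`. -/
def extK (ΔN n : ℕ) : ℤ :=
  2 + (⌈(((ΔN : ℚ) + 1)) / (n : ℚ)⌉ * n - ((ΔN : ℤ) + 1))

/-- The mean of the `l`-failure AoI sequence of the extended model over one
period, as a real number. -/
noncomputable def meanAoiExt (A B N a b n ΔB ΔN : ℕ) (l : ℕ) : ℝ :=
  (1 / ((a : ℝ) * B * N)) *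
    ∑ k ∈ Finset.Icc 1 (a * B * N),
      ((aoiExt (A * b * n : ℤ) (B * a * b : ℤ) (N * a * n : ℤ)
          (ΔB : ℤ) (ΔN : ℤ) l k : ℤ) : ℝ)

/-! Write a period index as `k = 1 + t·(Na) + j` with `t < B`, `j < Na`. Since `gcd(Na, Ab) = 1`,
in each block of `Na` consecutive `k` the residue `(k·A' − Δ_N − 1) % N'` runs through
`n·{0, …, Na − 1} + ((−Δ_N − 1) % n)`. Along a fixed class `j`, the argument of the outer
`% B'` grows by multiples of `ab·(NnA)` with `gcd(B, NnA) = 1`, so its residues run through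
`ab·{0, …, B − 1}` plus a common remainder in `[0, ab)`. Hence `S_l` is
`K + (B' + N' − n)/2 + l·N'` up to an error in `[−ab/2, ab/2)`, and the geometric weights
`p·p̄^l` have total mass `1` and mean `p̄/p`. -/

open Finset

theorem Int.emod_mul_of_pos {g m : ℤ} (hg : 0 < g) (hm : 0 < m) (y : ℤ) :
    y % (g * m) = y % g + g * (y / g % m) := by
  have hr := Int.emod_lt_of_pos y hg
  have hq := Int.emod_lt_of_pos (y / g) hm
  refine ((Int.ediv_emod_unique (q := y / g / m) (mul_pos hg hm)).2 ⟨?_, ?_, by nlinarith⟩).2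
  · linear_combination Int.mul_ediv_add_emod y g + g * Int.mul_ediv_add_emod (y / g) m
  · have := Int.emod_nonneg y hg.ne'
    have := Int.emod_nonneg (y / g) hm.ne'
    positivity

namespace Finset

theorem sum_range_add_mul_emod_of_isCoprime {m : ℕ} {e : ℤ} (he : IsCoprime (m : ℤ) e)
    (w : ℤ) :
    ∑ j ∈ range m, (w + j * e) % m = ∑ j ∈ range m, (j : ℤ) := by
  rcases Nat.eq_zero_or_pos m with rfl | hm
  · simp
  have hm' : (0 : ℤ) < m := by exact_mod_cast hm
  set σ : ℕ → ℕ := fun j => ((w + j * e) % m).toNat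
  have hσ (j : ℕ) : (σ j : ℤ) = (w + j * e) % m :=
    Int.toNat_of_nonneg (Int.emod_nonneg _ hm'.ne')
  have maps : Set.MapsTo σ (range m) (range m) := fun j _ => by
    have := Int.emod_lt_of_pos (w + j * e) hm'
    have := hσ j
    simp only [coe_range, Set.mem_Iio]
    omega
  have inj : Set.InjOn σ (range m) := by
    intro j₁ h₁ j₂ h₂ h
    simp only [coe_range, Set.mem_Iio] at h₁ h₂
    have hmod : w + j₁ * e ≡ w + j₂ * e [ZMOD m] := by
      rw [Int.ModEq, ← hσ, ← hσ, h]
    have hdvd : (m : ℤ) ∣ (j₂ - j₁ : ℤ) * e := by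
      simpa [sub_mul] using hmod.dvd
    have := Int.eq_zero_of_abs_lt_dvd (he.dvd_of_dvd_mul_right hdvd) (by rw [abs_lt]; omega)
    omega
  exact sum_nbij σ maps inj (surjOn_of_injOn_of_card_le σ maps inj le_rfl) fun j _ => (hσ j).symm

theorem sum_range_add_mul_mul_emod_mul {g : ℤ} (hg : 0 < g) {m : ℕ} {e : ℤ}
    (he : IsCoprime (m : ℤ) e) (w : ℤ) :
    ∑ t ∈ range m, (w + t * (g * e)) % (g * m) =
      m * (w % g) + g * ∑ t ∈ range m, (t : ℤ) := by
  rcases Nat.eq_zero_or_pos m with rfl | hm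
  · simp
  have hterm (t : ℕ) : (w + t * (g * e)) % (g * m) = w % g + g * ((w / g + t * e) % m) := by
    rw [Int.emod_mul_of_pos hg (by exact_mod_cast hm),
      show w + t * (g * e) = w + t * e * g by ring, Int.add_mul_emod_self_right,
      Int.add_mul_ediv_right _ _ hg.ne']
  simp only [hterm, sum_add_distrib, sum_const, card_range, nsmul_eq_mul, ← mul_sum,
    sum_range_add_mul_emod_of_isCoprime he]

theorem sum_Icc_one_mul {M : Type*} [AddCommMonoid M] (f : ℕ → M) (m P : ℕ) :
    ∑ k ∈ Icc 1 (m * P), f k = ∑ t ∈ range m, ∑ j ∈ range P, f (1 + t * P + j) := by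
  rw [← Ico_add_one_right_eq_Icc, sum_Ico_eq_sum_range, Nat.add_sub_cancel]
  induction m with
  | zero => simp
  | succ m ih => rw [Nat.succ_mul, sum_range_add, ih, sum_range_succ]; simp only [add_assoc]

theorem sum_range_natCast_real (P : ℕ) : ∑ j ∈ range P, (j : ℝ) = P * (P - 1) / 2 := by
  induction P with
  | zero => simp
  | succ P ih => rw [sum_range_succ, ih]; push_cast; ring

end Finset

theorem Nat.coprime_of_gcd_mul_left_eq_self {c x y : ℕ} (hc : 0 < c)
    (h : Nat.gcd (c * x) (c * y) = c) : Nat.Coprime x y := by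
  rw [Nat.gcd_mul_left] at h
  exact (mul_eq_left₀ hc.ne').mp h

theorem hasSum_geometric_weight_affine {p : ℝ} (hp0 : 0 < p) (hp1 : p ≤ 1) (c d : ℝ) :
    HasSum (fun l : ℕ => p * (1 - p) ^ l * (c + d * l)) (c + (1 - p) / p * d) := by
  have hq : ‖1 - p‖ < 1 := by rw [Real.norm_eq_abs, abs_lt]; constructor <;> linarith
  have hgeo := hasSum_geometric_of_norm_lt_one hq
  have hlin := hasSum_coe_mul_geometric_of_norm_lt_one hq
  have hval : c + (1 - p) / p * d =
      p * c * (1 - (1 - p))⁻¹ + p * d * ((1 - p) / (1 - (1 - p)) ^ 2) := by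
    rw [sub_sub_cancel]
    field_simp
  rw [hval]
  refine ((hgeo.mul_left (p * c)).add (hlin.mul_left (p * d))).congr_fun fun l => ?_
  ring

theorem summable_geometric_weight_and_abs_tsum_sub_le {p : ℝ} (hp0 : 0 < p) (hp1 : p ≤ 1)
    {f : ℕ → ℝ} {c d ε : ℝ} (hf : ∀ l, |f l - (c + d * l)| ≤ ε) :
    Summable (fun l => p * (1 - p) ^ l * f l) ∧
      |∑' l, p * (1 - p) ^ l * f l - (c + (1 - p) / p * d)| ≤ ε := by
  set w : ℕ → ℝ := fun l => p * (1 - p) ^ l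
  have hw0 (l : ℕ) : 0 ≤ w l := mul_nonneg hp0.le (pow_nonneg (by linarith) l)
  have hmain := hasSum_geometric_weight_affine hp0 hp1 c d
  have hweight : HasSum (fun l => w l * ε) ε := by
    simpa using (hasSum_geometric_weight_affine hp0 hp1 1 0).mul_right ε
  have herr (l : ℕ) : ‖w l * (f l - (c + d * l))‖ ≤ w l * ε := by
    rw [norm_mul, Real.norm_of_nonneg (hw0 l), Real.norm_eq_abs]
    exact mul_le_mul_of_nonneg_left (hf l) (hw0 l)
  have hsum := Summable.of_norm_bounded hweight.summable herr
  have hsplit : (fun l => w l * f l) =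
      fun l => w l * (c + d * l) + w l * (f l - (c + d * l)) := by
    ext l
    ring
  have htot := hmain.add hsum.hasSum
  rw [← hsplit] at htot
  refine ⟨htot.summable, ?_⟩
  rw [htot.tsum_eq, add_sub_cancel_left, ← Real.norm_eq_abs]
  exact tsum_of_norm_bounded hweight herr

theorem extK_eq (ΔN n : ℕ) : extK ΔN n = 2 + (-ΔN - 1 : ℤ) % n := by
  have hceil : ⌈((ΔN : ℚ) + 1) / n⌉ = -((-((ΔN : ℤ) + 1)) / n) := by
    rw [← neg_neg (((ΔN : ℚ) + 1) / n), Int.ceil_neg, ← neg_div,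
      ← Rat.floor_intCast_div_natCast]
    push_cast
    ring_nf
  rw [extK, hceil, neg_sub_left, add_comm 1, Int.emod_def]
  ring

def aoiRes (A' N' ΔN : ℤ) (k : ℕ) : ℤ := ((k : ℤ) * A' - ΔN - 1) % N'

def aoiGap (A' N' ΔB ΔN : ℤ) (l k : ℕ) : ℤ :=
  (k : ℤ) * A' - ΔB - 2 - l * N' - aoiRes A' N' ΔN k

theorem aoiExt_eq (A' B' N' ΔB ΔN : ℤ) (l k : ℕ) :
    aoiExt A' B' N' ΔB ΔN l k =
      2 + l * N' + aoiRes A' N' ΔN k + aoiGap A' N' ΔB ΔN l k % B' := by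
  rw [aoiExt, Int.emod_sub_emod]
  rfl

section Periodicity

variable {A' N' : ℤ} {P : ℕ} (hP : N' ∣ P * A') (ΔB ΔN : ℤ) (l k t : ℕ)
include hP

theorem aoiRes_add_mul : aoiRes A' N' ΔN (k + t * P) = aoiRes A' N' ΔN k := by
  obtain ⟨q, hq⟩ := hP
  have : ((k + t * P : ℕ) : ℤ) * A' - ΔN - 1 = (k * A' - ΔN - 1) + N' * (t * q) := by
    push_cast
    linear_combination t * hq
  rw [aoiRes, aoiRes, this, Int.add_mul_emod_self_left]

theorem aoiGap_add_mul :
    aoiGap A' N' ΔB ΔN l (k + t * P) = aoiGap A' N' ΔB ΔN l k + t * (P * A') := by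
  rw [aoiGap, aoiGap, aoiRes_add_mul hP]
  push_cast
  ring

end Periodicity

theorem sum_range_aoiRes {n α : ℤ} (hn : 0 < n) {P : ℕ} (hcop : IsCoprime (P : ℤ) α)
    (ΔN : ℤ) (k : ℕ) :
    ∑ j ∈ range P, aoiRes (α * n) (P * n) ΔN (k + j) =
      P * ((-ΔN - 1) % n) + n * ∑ j ∈ range P, (j : ℤ) := by
  have hterm (j : ℕ) : aoiRes (α * n) (P * n) ΔN (k + j) =
      ((k * α * n - ΔN - 1) + j * (n * α)) % (n * P) := by
    rw [aoiRes]
    push_cast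
    ring_nf
  rw [sum_congr rfl fun j _ => hterm j, sum_range_add_mul_mul_emod_mul hn hcop,
    show k * α * n - ΔN - 1 = -ΔN - 1 + (k * α) * n by ring, Int.add_mul_emod_self_right]

theorem sum_range_aoiGap_emod {A' N' g e : ℤ} {m P : ℕ} (hg : 0 < g)
    (hcop : IsCoprime (m : ℤ) e) (hP : N' ∣ P * A') (hPA : P * A' = g * e) (ΔB ΔN : ℤ)
    (l k : ℕ) :
    ∑ t ∈ range m, aoiGap A' N' ΔB ΔN l (k + t * P) % (g * m) =
      m * (aoiGap A' N' ΔB ΔN l k % g) + g * ∑ t ∈ range m, (t : ℤ) := by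
  simp only [aoiGap_add_mul hP, hPA, sum_range_add_mul_mul_emod_mul hg hcop]

theorem sum_Icc_aoiExt {A B N a b n : ℕ} (hn : 0 < n) (hab : 0 < a * b)
    (hNa : Nat.Coprime (N * a) (A * b)) (hB : Nat.Coprime B (N * n * A)) (ΔB ΔN : ℤ) (l : ℕ) :
    ∑ k ∈ Icc 1 (a * B * N), aoiExt (A * b * n) (B * a * b) (N * a * n) ΔB ΔN l k =
      a * B * N * (2 + l * (N * a * n) + (-ΔN - 1) % n) +
        B * n * ∑ j ∈ range (N * a), (j : ℤ) +
        N * a * (a * b) * ∑ t ∈ range B, (t : ℤ) +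
        B * ∑ j ∈ range (N * a),
          aoiGap (A * b * n) (N * a * n) ΔB ΔN l (1 + j) % (a * b) := by
  have hres (t : ℕ) :
      ∑ j ∈ range (N * a), aoiRes (A * b * n) (N * a * n) ΔN (1 + t * (N * a) + j) =
        N * a * ((-ΔN - 1) % n) + n * ∑ j ∈ range (N * a), (j : ℤ) := by
    have := sum_range_aoiRes (n := n) (α := A * b) (P := N * a) (by exact_mod_cast hn)
      (Nat.isCoprime_iff_coprime.mpr hNa) ΔN (1 + t * (N * a))
    push_cast at this
    exact this
  have hgap (j : ℕ) :
      ∑ t ∈ range B,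
          aoiGap (A * b * n) (N * a * n) ΔB ΔN l (1 + t * (N * a) + j) % (B * a * b) =
        B * (aoiGap (A * b * n) (N * a * n) ΔB ΔN l (1 + j) % (a * b)) +
          a * b * ∑ t ∈ range B, (t : ℤ) := by
    have := sum_range_aoiGap_emod (A' := A * b * n) (N' := N * a * n) (g := a * b)
      (e := (N * n * A : ℕ)) (P := N * a) (by exact_mod_cast hab)
      (Nat.isCoprime_iff_coprime.mpr hB) ⟨A * b, by push_cast; ring⟩
      (by push_cast; ring) ΔB ΔN l (1 + j)
    rw [show (a * b : ℤ) * B = B * a * b by ring] at this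
    rw [← this]
    refine sum_congr rfl fun t _ => ?_
    rw [add_right_comm]
  rw [show a * B * N = B * (N * a) by ring, sum_Icc_one_mul]
  simp only [aoiExt_eq, sum_add_distrib, hres]
  rw [sum_comm (f := fun t j => _ % _)]
  simp only [hgap, sum_add_distrib, sum_const, card_range, nsmul_eq_mul, ← mul_sum]
  push_cast
  ring

theorem abs_meanAoiExt_sub_le {A B N a b n : ℕ} (hB : 0 < B) (hN : 0 < N) (ha : 0 < a)
    (hb : 0 < b) (hn : 0 < n) (hNa : Nat.Coprime (N * a) (A * b)) (hBc : Nat.Coprime B (N * n * A))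
    (ΔB ΔN l : ℕ) :
    |meanAoiExt A B N a b n ΔB ΔN l -
        (((B : ℝ) * a * b + (N : ℝ) * a * n - n) / 2 + (extK ΔN n : ℝ) +
          (N : ℝ) * a * n * l)| ≤
      (a : ℝ) * b / 2 := by
  set W := ∑ j ∈ range (N * a), aoiGap (A * b * n) (N * a * n) ΔB ΔN l (1 + j) % (a * b)
    with hW
  have hab : (0 : ℤ) < a * b := by positivity
  have hW0 : 0 ≤ W := sum_nonneg fun j _ => Int.emod_nonneg _ hab.ne'
  have hW1 : W ≤ N * a * (a * b - 1) := by
    calc W ≤ ∑ j ∈ range (N * a), (a * b - 1 : ℤ) :=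
          sum_le_sum fun j _ => by
            linarith [Int.emod_lt_of_pos (aoiGap (A * b * n) (N * a * n) ΔB ΔN l (1 + j)) hab]
      _ = N * a * (a * b - 1) := by
          rw [sum_const, card_range, nsmul_eq_mul]
          push_cast
          ring
  clear_value W
  have hmean : meanAoiExt A B N a b n ΔB ΔN l =
      ((B : ℝ) * a * b + (N : ℝ) * a * n - n) / 2 + (extK ΔN n : ℝ) + (N : ℝ) * a * n * l -
        a * b / 2 + W / (N * a) := by
    rw [meanAoiExt, ← Int.cast_sum, sum_Icc_aoiExt hn (by positivity) hNa hBc, ← hW, extK_eq]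
    push_cast
    rw [sum_range_natCast_real, sum_range_natCast_real]
    push_cast
    field_simp
    ring
  have hW0' : (0 : ℝ) ≤ W / (N * a) := by positivity
  have hW1' : (W : ℝ) / (N * a) ≤ a * b - 1 := by
    rw [div_le_iff₀ (by positivity)]
    exact_mod_cast (by linarith : W ≤ (a * b - 1) * (N * a))
  rw [hmean, abs_le]
  constructor <;> linarith

theorem stmt15_general (A B N a b n : ℕ) (hB : 0 < B) (hN : 0 < N)
    (hapos : 0 < a) (hbpos : 0 < b) (hnpos : 0 < n)
    (ha : a = Nat.gcd (B * a * b) (N * a * n))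
    (hb : b = Nat.gcd (A * b * n) (B * a * b))
    (hn : n = Nat.gcd (A * b * n) (N * a * n))
    (ΔB ΔN : ℕ) (p : ℝ) (hp0 : 0 < p) (hp1 : p ≤ 1) :
    Summable (fun l : ℕ => p * (1 - p) ^ l * meanAoiExt A B N a b n ΔB ΔN l) ∧
      ((B : ℝ) * a * b + (N : ℝ) * a * n - n) / 2 + (extK ΔN n : ℝ) +
          ((1 - p) / p) * ((N : ℝ) * a * n) - (a : ℝ) * b / 2 ≤
        (∑' l : ℕ, p * (1 - p) ^ l * meanAoiExt A B N a b n ΔB ΔN l) ∧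
      (∑' l : ℕ, p * (1 - p) ^ l * meanAoiExt A B N a b n ΔB ΔN l) ≤
        ((B : ℝ) * a * b + (N : ℝ) * a * n - n) / 2 + (extK ΔN n : ℝ) +
          ((1 - p) / p) * ((N : ℝ) * a * n) + (a : ℝ) * b / 2 := by
  have hNa : Nat.Coprime (N * a) (A * b) :=
    (Nat.coprime_of_gcd_mul_left_eq_self hnpos (by convert hn.symm using 2 <;> ring)).symm
  have hBb : Nat.Coprime (B * b) (N * n) :=
    Nat.coprime_of_gcd_mul_left_eq_self hapos (by convert ha.symm using 2 <;> ring)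
  have hBa : Nat.Coprime (B * a) (A * n) :=
    Nat.coprime_of_gcd_mul_left_eq_self hbpos
      (by rw [Nat.gcd_comm]; convert hb.symm using 2 <;> ring)
  have hBc : Nat.Coprime B (N * n * A) :=
    hBb.coprime_mul_right.mul_right hBa.coprime_mul_right.coprime_mul_right_right
  obtain ⟨hsum, hdev⟩ := summable_geometric_weight_and_abs_tsum_sub_le hp0 hp1
    (abs_meanAoiExt_sub_le hB hN hapos hbpos hnpos hNa hBc ΔB ΔN)
  rw [abs_le] at hdev
  exact ⟨hsum, by linarith [hdev.1], by linarith [hdev.2]⟩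

/-- Corollary 2, eq. (17): with transmission success probability `p`, the
series `E = Σ_l p·p̄^l·S_l` converges and lies within `±a·b/2` around
`(B' + N' − n)/2 + K + (p̄/p)·N'`. -/
theorem stmt15 (A B N a b n : ℕ) (hA : 0 < A) (hB : 0 < B) (hN : 0 < N)
    (hapos : 0 < a) (hbpos : 0 < b) (hnpos : 0 < n)
    (ha : a = Nat.gcd (B * a * b) (N * a * n))
    (hb : b = Nat.gcd (A * b * n) (B * a * b))
    (hn : n = Nat.gcd (A * b * n) (N * a * n))
    (ΔB ΔN : ℕ) (p : ℝ) (hp0 : 0 < p) (hp1 : p ≤ 1) :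
    Summable (fun l : ℕ => p * (1 - p) ^ l * meanAoiExt A B N a b n ΔB ΔN l) ∧
      ((B : ℝ) * a * b + (N : ℝ) * a * n - n) / 2 + (extK ΔN n : ℝ) +
          ((1 - p) / p) * ((N : ℝ) * a * n) - (a : ℝ) * b / 2 ≤
        (∑' l : ℕ, p * (1 - p) ^ l * meanAoiExt A B N a b n ΔB ΔN l) ∧
      (∑' l : ℕ, p * (1 - p) ^ l * meanAoiExt A B N a b n ΔB ΔN l) ≤
        ((B : ℝ) * a * b + (N : ℝ) * a * n - n) / 2 + (extK ΔN n : ℝ) +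
          ((1 - p) / p) * ((N : ℝ) * a * n) + (a : ℝ) * b / 2 :=
  stmt15_general A B N a b n hB hN hapos hbpos hnpos ha hb hn ΔB ΔN p hp0 hp1
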